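/- Let 𝔄 be a C*-algebra, E a Hilbert C*-module over 𝔄, and (U_t)_{t∈ℝ} a C_0-group on E such that every U_t is a unitary element of L(E). Then: (i) there exists a self-adjoint regular operator A on E such that U_t = exp(itA) := φ_A(λ ↦ exp(iλt)) for all t ∈ ℝ; (ii) if moreover t ↦ U_t is norm continuous, then A ∈ L(E), i.e. A is a bounded adjointable operator. -/

import Mathlib

/-!
The generator `B` of `U` (the derivative at `0` of `t ↦ U t x`) is densely defined, because the
averages `t⁻¹ ∫₀ᵗ U s x` lie in its domain, and skew-symmetric, because `⟪U t x, U t y⟫` does not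
depend on `t`. The Laplace transforms `∫₀^∞ e^{-s} U (±s) y ds` invert `1 ∓ B`, so `1 ± B` are onto.
This forces `B* = -B`; hence `T = -iB` is self-adjoint, closed (as an adjoint), and regular since
`1 + T*T = (1 + B) (1 - B)` is onto. If `U` is norm continuous, `t⁻¹ ∫₀ᵗ U s` is invertible for
small `t` and maps into the domain of `B`, so `T` is everywhere defined, and bounded by
Hellinger–Toeplitz.
-/

open Filter Topology Set ContinuousLinearMap
open scoped RightActions

noncomputable section

universe u

namespace OSMult

/-- The Hilbert C⋆-module structure (right `A`-module) as `CStarModule` was defined in the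
older Mathlib; Mathlib's `CStarModule` now describes left modules. -/
class CStarModuleRight (A : outParam <| Type*) (E : Type*) [NonUnitalSemiring A] [StarRing A] [Module ℂ A]
    [AddCommGroup E] [Module ℂ E] [PartialOrder A] [SMul Aᵐᵒᵖ E] [Norm A] [Norm E]
    extends Inner A E where
  inner_add_right {x} {y} {z} : inner x (y + z) = inner x y + inner x z
  inner_self_nonneg {x} : 0 ≤ inner x x
  inner_self {x} : inner x x = 0 ↔ x = 0
  inner_op_smul_right {a : A} {x y : E} : inner x (y <• a) = inner x y * a
  inner_smul_right_complex {z : ℂ} {x} {y} : inner x (z • y) = z • inner x y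
  star_inner x y : star (inner x y) = inner y x
  norm_eq_sqrt_norm_inner_self x : ‖x‖ = √‖inner x x‖

section Groups

variable {V : Type*} [NormedAddCommGroup V] [NormedSpace ℂ V]

/-- A `C₀`-group (strongly continuous one-parameter group) on `V`. -/
structure IsC0Group (U : ℝ → (V →L[ℂ] V)) : Prop where
  map_zero : U 0 = ContinuousLinearMap.id ℂ V
  map_add : ∀ s t : ℝ, U (s + t) = (U s).comp (U t)
  strong_cont : ∀ x : V, Continuous fun t => U t x

/-- `A`, with domain `D`, is the generator of the group `U`. -/
def IsGenOfGroup (U : ℝ → (V →L[ℂ] V)) (D : Set V) (A : V → V) : Prop :=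
  (∀ x, x ∈ D ↔ ∃ y, Tendsto (fun t : ℝ => (t : ℂ)⁻¹ • (U t x - x)) (𝓝[≠] (0 : ℝ)) (𝓝 y)) ∧
    ∀ x ∈ D, Tendsto (fun t : ℝ => (t : ℂ)⁻¹ • (U t x - x)) (𝓝[≠] (0 : ℝ)) (𝓝 (A x))

/-- `A : D ⊆ V → V` is `ℂ`-linear on its domain `D`. -/
structure IsLinearOn (D : Set V) (A : V → V) : Prop where
  zero_mem : (0 : V) ∈ D
  add_mem : ∀ ⦃x y⦄, x ∈ D → y ∈ D → x + y ∈ D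
  smul_mem : ∀ (c : ℂ) ⦃x⦄, x ∈ D → c • x ∈ D
  map_add : ∀ ⦃x y⦄, x ∈ D → y ∈ D → A (x + y) = A x + A y
  map_smul : ∀ (c : ℂ) ⦃x⦄, x ∈ D → A (c • x) = c • A x

end Groups

section HilbertModule

variable {A : Type u} [NonUnitalCStarAlgebra A] [PartialOrder A] [StarOrderedRing A]
variable {E : Type u} [NormedAddCommGroup E] [NormedSpace ℂ E] [SMul Aᵐᵒᵖ E]
  [CStarModuleRight A E] [CompleteSpace E]

local notation "⟪" x ", " y "⟫" => inner (𝕜 := A) x y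

/-- The domain of the adjoint of the (unbounded) operator `T : D ⊆ E → E` on the Hilbert
C⋆-module `E`: all `y` for which some `z` satisfies `⟪Tx, y⟫ = ⟪x, z⟫` for all `x ∈ D`. -/
def adjDom (D : Set E) (T : E → E) : Set E :=
  {y | ∃ z : E, ∀ x ∈ D, ⟪T x, y⟫ = ⟪x, z⟫}

/-- The adjoint `T*` of the (unbounded) operator `T : D ⊆ E → E`; on `D(T*)` its value is
the (for densely defined `T` unique) element `z` with `⟪Tx, y⟫ = ⟪x, z⟫` for all `x ∈ D`. -/
def adjFun (D : Set E) (T : E → E) (y : E) : E :=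
  letI := Classical.propDecidable
  if h : ∃ z : E, ∀ x ∈ D, ⟪T x, y⟫ = ⟪x, z⟫ then Classical.choose h else 0

/-- `T : D ⊆ E → E` is a regular operator on the Hilbert C⋆-module `E`: it is densely
defined, `A`-linear, closed, its adjoint `T*` is densely defined, and `1 + T*T` has dense
image. -/
structure IsRegular (D : Set E) (T : E → E) : Prop where
  dense_dom : Dense D
  linear : IsLinearOn D T
  op_smul_mem : ∀ (a : A) ⦃x⦄, x ∈ D → x <• a ∈ D
  map_op_smul : ∀ (a : A) ⦃x⦄, x ∈ D → T (x <• a) = T x <• a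
  closed_graph : IsClosed {p : E × E | p.1 ∈ D ∧ p.2 = T p.1}
  dense_adj_dom : Dense (adjDom D T)
  dense_image : Dense ((fun x => x + adjFun D T (T x)) '' {x | x ∈ D ∧ T x ∈ adjDom D T})

/-- The regular operator `T` is self-adjoint: `T* = T`. -/
def IsSelfAdjointOp (D : Set E) (T : E → E) : Prop :=
  adjDom D T = D ∧ ∀ y ∈ D, adjFun D T y = T y

/-- The regular operator `T` is skew-adjoint: `T* = -T`. -/
def IsSkewAdjointOp (D : Set E) (T : E → E) : Prop :=
  adjDom D T = D ∧ ∀ y ∈ D, adjFun D T y = -T y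

/-- `v` is an adjoint of the bounded operator `u` on the Hilbert C⋆-module `E`; thus
`u` is an adjointable operator, `u ∈ L(E)`. -/
def AdjointableCLM (u v : E →L[ℂ] E) : Prop :=
  ∀ x y : E, ⟪u x, y⟫ = ⟪x, v y⟫

/-- `u` is a unitary element of the C⋆-algebra `L(E)` of adjointable operators on `E`. -/
def IsUnitaryCLM (u : E →L[ℂ] E) : Prop :=
  ∃ v : E →L[ℂ] E, AdjointableCLM u v ∧
    v.comp u = ContinuousLinearMap.id ℂ E ∧ u.comp v = ContinuousLinearMap.id ℂ E

end HilbertModule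

section HilbertModuleBasics

variable {A : Type*} [NonUnitalCStarAlgebra A] [PartialOrder A]
  {E : Type*} [NormedAddCommGroup E] [NormedSpace ℂ E] [SMul Aᵐᵒᵖ E] [CStarModuleRight A E]

local notation "⟪" x ", " y "⟫" => inner (𝕜 := A) x y

/-- A right Hilbert `A`-module is a Hilbert `Aᵐᵒᵖ`-module in Mathlib's sense, with inner product
`op ⟪x, y⟫`. -/
instance CStarModuleRight.toCStarModule : CStarModule Aᵐᵒᵖ E where
  inner x y := MulOpposite.op ⟪x, y⟫
  inner_add_right := by simp [CStarModuleRight.inner_add_right]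
  inner_self_nonneg := by simp [← MulOpposite.unop_nonneg, CStarModuleRight.inner_self_nonneg]
  inner_self := by simp [CStarModuleRight.inner_self]
  inner_op_smul_right {a x y} := by
    rw [← MulOpposite.op_unop a, ← MulOpposite.op_mul, CStarModuleRight.inner_op_smul_right]
  inner_smul_right_complex := by
    simp [CStarModuleRight.inner_smul_right_complex, MulOpposite.op_smul]
  star_inner x y := congrArg MulOpposite.op (CStarModuleRight.star_inner x y)
  norm_eq_sqrt_norm_inner_self x := by
    simp [CStarModuleRight.norm_eq_sqrt_norm_inner_self x, MulOpposite.norm_op]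

namespace CStarModuleRight

lemma inner_sub_left (x y z : E) : ⟪x - y, z⟫ = ⟪x, z⟫ - ⟪y, z⟫ :=
  congrArg MulOpposite.unop (CStarModule.inner_sub_left (A := Aᵐᵒᵖ) (x := x) (y := y) (z := z))

lemma inner_sub_right (x y z : E) : ⟪x, y - z⟫ = ⟪x, y⟫ - ⟪x, z⟫ :=
  congrArg MulOpposite.unop (CStarModule.inner_sub_right (A := Aᵐᵒᵖ) (x := x) (y := y) (z := z))

lemma inner_zero_right (x : E) : ⟪x, 0⟫ = 0 :=
  congrArg MulOpposite.unop (CStarModule.inner_zero_right (A := Aᵐᵒᵖ) (x := x))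

lemma inner_neg_right (x y : E) : ⟪x, -y⟫ = -⟪x, y⟫ :=
  congrArg MulOpposite.unop (CStarModule.inner_neg_right (A := Aᵐᵒᵖ) (x := x) (y := y))

lemma inner_smul_left_complex (c : ℂ) (x y : E) : ⟪c • x, y⟫ = star c • ⟪x, y⟫ :=
  congrArg MulOpposite.unop
    (CStarModule.inner_smul_left_complex (A := Aᵐᵒᵖ) (z := c) (x := x) (y := y))

lemma inner_smul_left_real (r : ℝ) (x y : E) : ⟪r • x, y⟫ = r • ⟪x, y⟫ :=
  congrArg MulOpposite.unop
    (CStarModule.inner_smul_left_real (A := Aᵐᵒᵖ) (z := r) (x := x) (y := y))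

lemma inner_smul_right_real (r : ℝ) (x y : E) : ⟪x, r • y⟫ = r • ⟪x, y⟫ :=
  congrArg MulOpposite.unop
    (CStarModule.inner_smul_right_real (A := Aᵐᵒᵖ) (z := r) (x := x) (y := y))

lemma inner_op_smul_left (a : A) (x y : E) : ⟪x <• a, y⟫ = star a * ⟪x, y⟫ :=
  congrArg MulOpposite.unop
    (CStarModule.inner_op_smul_left (A := Aᵐᵒᵖ) (a := MulOpposite.op a) (x := x) (y := y))

lemma ext_inner_right {u v : E} (h : ∀ w, ⟪w, u⟫ = ⟪w, v⟫) : u = v := by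
  rw [← sub_eq_zero, ← inner_self (A := A), inner_sub_right, h, sub_self]

lemma add_op_smul (x y : E) (a : A) : (x + y) <• a = x <• a + y <• a :=
  ext_inner_right fun w => by simp only [inner_add_right, inner_op_smul_right, add_mul]

lemma smul_op_smul (c : ℂ) (x : E) (a : A) : (c • x) <• a = c • (x <• a) :=
  ext_inner_right fun w => by
    simp only [inner_smul_right_complex, inner_op_smul_right, smul_mul_assoc]

lemma norm_sq_eq (x : E) : ‖x‖ ^ 2 = ‖⟪x, x⟫‖ := by
  rw [norm_eq_sqrt_norm_inner_self x, Real.sq_sqrt (norm_nonneg _)]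

lemma norm_op_smul_le (x : E) (a : A) : ‖x <• a‖ ≤ ‖a‖ * ‖x‖ := by
  have h : ‖x <• a‖ ^ 2 ≤ (‖a‖ * ‖x‖) ^ 2 :=
    calc ‖x <• a‖ ^ 2 = ‖star a * ⟪x, x⟫ * a‖ := by
          rw [norm_sq_eq, inner_op_smul_left, inner_op_smul_right, mul_assoc]
      _ ≤ ‖a‖ * ‖⟪x, x⟫‖ * ‖a‖ := by
          refine (norm_mul_le _ _).trans ?_
          gcongr
          exact (norm_mul_le _ _).trans_eq (by rw [norm_star])
      _ = (‖a‖ * ‖x‖) ^ 2 := by rw [← norm_sq_eq]; ring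
  exact (pow_le_pow_iff_left₀ (norm_nonneg _) (by positivity) two_ne_zero).mp h

def opSmulCLM (a : A) : E →L[ℂ] E :=
  LinearMap.mkContinuous
    { toFun := fun x => x <• a
      map_add' := fun x y => add_op_smul x y a
      map_smul' := fun c x => smul_op_smul c x a } ‖a‖ fun x => norm_op_smul_le x a

lemma opSmulCLM_apply (a : A) (x : E) : opSmulCLM a x = x <• a := rfl

variable [StarOrderedRing A]

lemma continuous_inner : Continuous fun p : E × E => ⟪p.1, p.2⟫ :=
  MulOpposite.continuous_unop.comp (CStarModule.continuous_inner (A := Aᵐᵒᵖ))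

lemma ext_inner_right_of_dense {D : Set E} (hD : Dense D) {u v : E}
    (h : ∀ w ∈ D, ⟪w, u⟫ = ⟪w, v⟫) : u = v :=
  ext_inner_right <| congrFun <| Continuous.ext_on hD
    (continuous_inner.comp (continuous_id.prodMk continuous_const))
    (continuous_inner.comp (continuous_id.prodMk continuous_const)) h

end CStarModuleRight

end HilbertModuleBasics

section Generator

open MeasureTheory

variable {V : Type*} [NormedAddCommGroup V] [NormedSpace ℂ V] {U : ℝ → V →L[ℂ] V}

namespace IsC0Group

lemma apply_zero (hU : IsC0Group U) (x : V) : U 0 x = x := by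
  rw [hU.map_zero, ContinuousLinearMap.id_apply]

lemma apply_add (hU : IsC0Group U) (s t : ℝ) (x : V) : U (s + t) x = U s (U t x) := by
  rw [hU.map_add, ContinuousLinearMap.comp_apply]

lemma apply_apply_neg (hU : IsC0Group U) (t : ℝ) (x : V) : U t (U (-t) x) = x := by
  rw [← hU.apply_add, add_neg_cancel, hU.apply_zero]

lemma neg (hU : IsC0Group U) : IsC0Group fun t => U (-t) where
  map_zero := by rw [neg_zero, hU.map_zero]
  map_add s t := by rw [neg_add, hU.map_add]
  strong_cont x := (hU.strong_cont x).comp continuous_neg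

end IsC0Group

def genDom (U : ℝ → V →L[ℂ] V) : Submodule ℂ V where
  carrier := {x | DifferentiableAt ℝ (fun t => U t x) 0}
  add_mem' {x y} hx hy := show DifferentiableAt ℝ (fun t => U t (x + y)) 0 by
    simpa only [map_add] using hx.fun_add hy
  zero_mem' := show DifferentiableAt ℝ (fun t => U t 0) 0 by simp
  smul_mem' c x hx := show DifferentiableAt ℝ (fun t => U t (c • x)) 0 by
    simpa only [map_smul] using hx.fun_const_smul c

def gen (U : ℝ → V →L[ℂ] V) (x : V) : V := deriv (fun t => U t x) 0

lemma hasDerivAt_gen {x : V} (hx : x ∈ genDom U) : HasDerivAt (fun t => U t x) (gen U x) 0 :=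
  DifferentiableAt.hasDerivAt hx

lemma mem_genDom_of_hasDerivAt {x y : V} (h : HasDerivAt (fun t => U t x) y 0) :
    x ∈ genDom U :=
  h.differentiableAt

lemma gen_eq_of_hasDerivAt {x y : V} (h : HasDerivAt (fun t => U t x) y 0) : gen U x = y :=
  h.deriv

lemma gen_add {x y : V} (hx : x ∈ genDom U) (hy : y ∈ genDom U) :
    gen U (x + y) = gen U x + gen U y :=
  gen_eq_of_hasDerivAt <| by
    simpa only [map_add] using (hasDerivAt_gen hx).fun_add (hasDerivAt_gen hy)

lemma gen_sub {x y : V} (hx : x ∈ genDom U) (hy : y ∈ genDom U) :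
    gen U (x - y) = gen U x - gen U y :=
  gen_eq_of_hasDerivAt <| by
    simpa only [map_sub] using (hasDerivAt_gen hx).fun_sub (hasDerivAt_gen hy)

lemma gen_smul (c : ℂ) {x : V} (hx : x ∈ genDom U) : gen U (c • x) = c • gen U x :=
  gen_eq_of_hasDerivAt <| by
    simpa only [map_smul] using (hasDerivAt_gen hx).fun_const_smul c

lemma isLinearOn_gen : IsLinearOn (genDom U : Set V) (gen U) where
  zero_mem := (genDom U).zero_mem
  add_mem _ _ := (genDom U).add_mem
  smul_mem c _ := (genDom U).smul_mem c
  map_add _ _ := gen_add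
  map_smul c _ := gen_smul c

lemma IsLinearOn.const_smul {D : Set V} {T : V → V} (hT : IsLinearOn D T) (c : ℂ) :
    IsLinearOn D fun x => c • T x where
  zero_mem := hT.zero_mem
  add_mem := hT.add_mem
  smul_mem := hT.smul_mem
  map_add x y hx hy := by rw [hT.map_add hx hy, smul_add]
  map_smul d x hx := by rw [hT.map_smul d hx, smul_comm]

lemma hasDerivAt_iff_tendsto (hU : IsC0Group U) {x y : V} :
    HasDerivAt (fun t => U t x) y 0 ↔
      Tendsto (fun t : ℝ => (t : ℂ)⁻¹ • (U t x - x)) (𝓝[≠] 0) (𝓝 y) := by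
  simp only [hasDerivAt_iff_tendsto_slope_zero, zero_add, hU.apply_zero, ← Complex.ofReal_inv,
    Complex.coe_smul]

lemma tendsto_slope_gen (hU : IsC0Group U) {x : V} (hx : x ∈ genDom U) :
    Tendsto (fun t : ℝ => t⁻¹ • (U t x - x)) (𝓝[≠] 0) (𝓝 (gen U x)) := by
  simpa only [zero_add, hU.apply_zero] using (hasDerivAt_gen hx).tendsto_slope_zero

lemma isGenOfGroup_gen (hU : IsC0Group U) : IsGenOfGroup U (genDom U) (gen U) :=
  ⟨fun _ => ⟨fun hx => ⟨_, (hasDerivAt_iff_tendsto hU).1 (hasDerivAt_gen hx)⟩,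
      fun ⟨_, hy⟩ => mem_genDom_of_hasDerivAt ((hasDerivAt_iff_tendsto hU).2 hy)⟩,
    fun _ hx => (hasDerivAt_iff_tendsto hU).1 (hasDerivAt_gen hx)⟩

lemma mem_genDom_neg_iff {x : V} : x ∈ genDom (fun t => U (-t)) ↔ x ∈ genDom U := by
  show DifferentiableAt ℝ (fun t => U (-t) x) 0 ↔ DifferentiableAt ℝ (fun t => U t x) 0
  simpa only [neg_zero] using differentiableAt_comp_neg (f := fun t => U t x) (a := (0 : ℝ))

lemma gen_neg (x : V) : gen (fun t => U (-t)) x = -gen U x := by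
  show deriv (fun t => U (-t) x) 0 = -deriv (fun t => U t x) 0
  simpa only [neg_zero] using deriv_comp_neg (f := fun t => U t x) (x := (0 : ℝ))

variable [CompleteSpace V]

lemma hasDerivAt_integral (hU : IsC0Group U) (x : V) (b : ℝ) :
    HasDerivAt (fun t => ∫ s in (0 : ℝ)..t, U s x) (U b x) b :=
  intervalIntegral.integral_hasDerivAt_right ((hU.strong_cont x).intervalIntegrable _ _)
    ((hU.strong_cont x).stronglyMeasurableAtFilter _ _) (hU.strong_cont x).continuousAt

lemma integral_mem_genDom (hU : IsC0Group U) (x : V) (t : ℝ) :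
    ∫ s in (0 : ℝ)..t, U s x ∈ genDom U := by
  have hint : ∀ a b : ℝ, IntervalIntegrable (fun s => U s x) volume a b :=
    fun a b => (hU.strong_cont x).intervalIntegrable a b
  have hshift : (fun r => U r (∫ s in (0 : ℝ)..t, U s x)) =
      fun r => (∫ s in (0 : ℝ)..t + r, U s x) - ∫ s in (0 : ℝ)..r, U s x := by
    funext r
    rw [← (U r).intervalIntegral_comp_comm (hint 0 t),
      intervalIntegral.integral_interval_sub_left (hint 0 (t + r)) (hint 0 r)]
    simp_rw [← hU.apply_add, add_comm r]
    rw [intervalIntegral.integral_comp_add_right (fun s => U s x), zero_add]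
  show DifferentiableAt ℝ _ 0
  rw [hshift]
  exact ((hasDerivAt_integral hU x (t + 0)).comp_const_add t 0).differentiableAt.sub
    (hasDerivAt_integral hU x 0).differentiableAt

lemma dense_genDom (hU : IsC0Group U) : Dense (genDom U : Set V) := fun x => by
  have h := (hasDerivAt_integral hU x 0).tendsto_slope_zero
  simp only [zero_add, intervalIntegral.integral_same, sub_zero, hU.apply_zero] at h
  exact mem_closure_of_tendsto h (Eventually.of_forall fun t =>
    (genDom U).smul_of_tower_mem t⁻¹ (integral_mem_genDom hU x t))

lemma genDom_eq_top_of_continuous (hU : IsC0Group U) (hc : Continuous U) : genDom U = ⊤ := by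
  have hderiv : HasDerivAt (fun t => ∫ s in (0 : ℝ)..t, U s) (U 0) 0 :=
    intervalIntegral.integral_hasDerivAt_right (hc.intervalIntegrable _ _)
      (hc.stronglyMeasurableAtFilter _ _) hc.continuousAt
  have hlim : Tendsto (fun t : ℝ => t⁻¹ • ∫ s in (0 : ℝ)..t, U s) (𝓝[≠] 0) (𝓝 1) := by
    simpa [hU.map_zero, ← ContinuousLinearMap.one_def] using hderiv.tendsto_slope_zero
  obtain ⟨t, u, hu⟩ := (hlim.eventually (Units.isOpen.mem_nhds isUnit_one)).exists
  refine eq_top_iff.2 fun y _ => ?_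
  have hy : y = t⁻¹ • ∫ s in (0 : ℝ)..t, U s ((↑u⁻¹ : V →L[ℂ] V) y) := by
    rw [← ContinuousLinearMap.intervalIntegral_apply (hc.intervalIntegrable _ _), ← smul_apply,
      ← hu, ← mul_apply_eq_comp, u.mul_inv, one_apply_eq_self]
  rw [hy]
  exact (genDom U).smul_of_tower_mem _ (integral_mem_genDom hU _ t)

end Generator

section Resolvent

open MeasureTheory

lemma setIntegral_Ioi_comp_add_right {F : Type*} [NormedAddCommGroup F] [NormedSpace ℝ F]
    (f : ℝ → F) (a t : ℝ) : ∫ s in Ioi a, f (s + t) = ∫ s in Ioi (a + t), f s := by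
  rw [← (measurePreserving_add_right volume t).setIntegral_preimage_emb
    (MeasurableEquiv.addRight t).measurableEmbedding f, preimage_add_const_Ioi,
    add_sub_cancel_right]

variable {V : Type*} [NormedAddCommGroup V] [NormedSpace ℂ V] {U : ℝ → V →L[ℂ] V}

lemma integrableOn_exp_neg_smul_apply (hU : IsC0Group U) (hcontr : ∀ t x, ‖U t x‖ ≤ ‖x‖)
    (x : V) (a : ℝ) : IntegrableOn (fun s => Real.exp (-s) • U s x) (Ioi a) := by
  refine Integrable.mono' ((exp_neg_integrableOn_Ioi a one_pos).mul_const ‖x‖)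
    ((Real.continuous_exp.comp continuous_neg).smul (hU.strong_cont x)).aestronglyMeasurable
    (Eventually.of_forall fun s => ?_)
  rw [norm_smul, Real.norm_of_nonneg (Real.exp_pos _).le, neg_one_mul]
  exact mul_le_mul_of_nonneg_left (hcontr s x) (Real.exp_pos _).le

variable [CompleteSpace V]

/-- The Laplace transform `∫₀^∞ e^{-s} U s y ds` is the resolvent `(1 - gen U)⁻¹ y`. -/
lemma hasDerivAt_apply_laplace (hU : IsC0Group U) (hcontr : ∀ t x, ‖U t x‖ ≤ ‖x‖) (y : V) :
    HasDerivAt (fun t => U t (∫ s in Ioi 0, Real.exp (-s) • U s y))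
      ((∫ s in Ioi 0, Real.exp (-s) • U s y) - y) 0 := by
  set g : ℝ → V := fun s => Real.exp (-s) • U s y with hg
  have hint : ∀ a, IntegrableOn g (Ioi a) := integrableOn_exp_neg_smul_apply hU hcontr y
  have hshift : ∀ t, U t (∫ s in Ioi 0, g s) =
      Real.exp t • ((∫ s in Ioi 0, g s) - ∫ s in (0 : ℝ)..t, g s) := fun t => by
    have hUg : ∀ s, U t (g s) = Real.exp t • g (s + t) := fun s => by
      rw [hg, map_smul_of_tower, smul_smul, ← Real.exp_add, ← hU.apply_add, add_comm t s]
      ring_nf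
    rw [← intervalIntegral.integral_Ioi_sub_Ioi' (hint 0) (hint t), sub_sub_cancel,
      ← (U t).integral_comp_comm (hint 0)]
    simp_rw [hUg]
    rw [integral_smul, setIntegral_Ioi_comp_add_right g 0 t, zero_add]
  have hG : HasDerivAt (fun t => (∫ s in Ioi 0, g s) - ∫ s in (0 : ℝ)..t, g s) (-y) 0 := by
    have hgc : Continuous g := (Real.continuous_exp.comp continuous_neg).smul (hU.strong_cont y)
    simpa [hg, hU.apply_zero] using (hasDerivAt_const (0 : ℝ) (∫ s in Ioi 0, g s)).fun_sub
      (intervalIntegral.integral_hasDerivAt_right (hgc.intervalIntegrable 0 0)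
        (hgc.stronglyMeasurableAtFilter _ _) hgc.continuousAt)
  have h := (Real.hasDerivAt_exp 0).fun_smul hG
  simp only [Real.exp_zero, one_smul, intervalIntegral.integral_same, sub_zero] at h
  simp_rw [hshift]
  convert h using 1
  abel

lemma exists_sub_gen_eq (hU : IsC0Group U) (hcontr : ∀ t x, ‖U t x‖ ≤ ‖x‖) (y : V) :
    ∃ x ∈ genDom U, x - gen U x = y :=
  have h := hasDerivAt_apply_laplace hU hcontr y
  ⟨_, mem_genDom_of_hasDerivAt h, by rw [gen_eq_of_hasDerivAt h, sub_sub_cancel]⟩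

lemma exists_add_gen_eq (hU : IsC0Group U) (hcontr : ∀ t x, ‖U t x‖ ≤ ‖x‖) (y : V) :
    ∃ x ∈ genDom U, x + gen U x = y := by
  obtain ⟨x, hx, hxy⟩ := exists_sub_gen_eq hU.neg (fun t => hcontr (-t)) y
  exact ⟨x, mem_genDom_neg_iff.1 hx, by rwa [gen_neg, sub_neg_eq_add] at hxy⟩

/-- Factor `1 - (gen U)²` as `(1 + gen U) (1 - gen U)`. -/
lemma exists_sub_gen_gen_eq (hU : IsC0Group U) (hcontr : ∀ t x, ‖U t x‖ ≤ ‖x‖) (y : V) :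
    ∃ x ∈ genDom U, gen U x ∈ genDom U ∧ x - gen U (gen U x) = y := by
  obtain ⟨z, hz, rfl⟩ := exists_add_gen_eq hU hcontr y
  obtain ⟨x, hx, rfl⟩ := exists_sub_gen_eq hU hcontr z
  have hgx : gen U x ∈ genDom U := by simpa using sub_mem hx hz
  refine ⟨x, hx, hgx, ?_⟩
  rw [gen_sub hx hgx]
  abel

end Resolvent

section Operators

variable {A : Type u} [NonUnitalCStarAlgebra A] [PartialOrder A]
  {E : Type u} [NormedAddCommGroup E] [NormedSpace ℂ E] [SMul Aᵐᵒᵖ E] [CStarModuleRight A E]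
  {D : Set E} {T : E → E}

local notation "⟪" x ", " y "⟫" => inner (𝕜 := A) x y

lemma inner_adjFun {x y : E} (hy : y ∈ adjDom D T) (hx : x ∈ D) :
    ⟪T x, y⟫ = ⟪x, adjFun D T y⟫ := by
  have hy' : ∃ z : E, ∀ x ∈ D, ⟪T x, y⟫ = ⟪x, z⟫ := hy
  rw [adjFun, dif_pos hy']
  exact hy'.choose_spec x hx

lemma adjDom_const_smul {c : ℂ} (hc : c ≠ 0) : adjDom D (fun x => c • T x) = adjDom D T := by
  ext y
  refine ⟨fun ⟨z, hz⟩ => ⟨(star c)⁻¹ • z, fun x hx => ?_⟩,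
    fun ⟨z, hz⟩ => ⟨star c • z, fun x hx => ?_⟩⟩
  · rw [CStarModuleRight.inner_smul_right_complex, ← hz x hx,
      CStarModuleRight.inner_smul_left_complex, smul_smul, inv_mul_cancel₀ (star_ne_zero.2 hc),
      one_smul]
  · rw [CStarModuleRight.inner_smul_left_complex, hz x hx,
      CStarModuleRight.inner_smul_right_complex]

lemma IsSelfAdjointOp.inner_map_eq (h : IsSelfAdjointOp D T) {x y : E} (hx : x ∈ D)
    (hy : y ∈ D) : ⟪T x, y⟫ = ⟪x, T y⟫ := by
  rw [inner_adjFun (h.1.symm ▸ hy) hx, h.2 y hy]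

variable [StarOrderedRing A]

lemma adjFun_eq_of_forall (hD : Dense D) {y z : E} (h : ∀ x ∈ D, ⟪T x, y⟫ = ⟪x, z⟫) :
    adjFun D T y = z :=
  CStarModuleRight.ext_inner_right_of_dense hD fun x hx => by
    rw [← inner_adjFun ⟨z, h⟩ hx, h x hx]

lemma adjFun_const_smul (hD : Dense D) (c : ℂ) {y : E} (hy : y ∈ adjDom D T) :
    adjFun D (fun x => c • T x) y = star c • adjFun D T y :=
  adjFun_eq_of_forall hD fun x hx => by
    rw [CStarModuleRight.inner_smul_left_complex, inner_adjFun hy hx,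
      CStarModuleRight.inner_smul_right_complex]

lemma IsSkewAdjointOp.isSelfAdjointOp_neg_I_smul (hD : Dense D) (h : IsSkewAdjointOp D T) :
    IsSelfAdjointOp D fun x => -Complex.I • T x := by
  refine ⟨(adjDom_const_smul (neg_ne_zero.2 Complex.I_ne_zero)).trans h.1, fun y hy => ?_⟩
  rw [adjFun_const_smul hD _ (h.1.symm ▸ hy), h.2 y hy]
  simp

lemma IsSelfAdjointOp.isClosed_graph (hD : Dense D) (h : IsSelfAdjointOp D T) :
    IsClosed {p : E × E | p.1 ∈ D ∧ p.2 = T p.1} := by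
  have hgraph : {p : E × E | p.1 ∈ D ∧ p.2 = T p.1} = ⋂ x ∈ D, {p | ⟪T x, p.1⟫ = ⟪x, p.2⟫} := by
    ext ⟨y, z⟩
    simp only [mem_ofPred_eq, mem_iInter]
    refine ⟨fun ⟨hy, hz⟩ x hx => hz ▸ h.inner_map_eq hx hy, fun hyz => ?_⟩
    have hy : y ∈ D := h.1 ▸ ⟨z, hyz⟩
    exact ⟨hy, by rw [← h.2 y hy, adjFun_eq_of_forall hD hyz]⟩
  rw [hgraph]
  exact isClosed_biInter fun x _ =>
    isClosed_eq (CStarModuleRight.continuous_inner.comp (continuous_const.prodMk continuous_fst))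
      (CStarModuleRight.continuous_inner.comp (continuous_const.prodMk continuous_snd))

/-- Hellinger–Toeplitz. -/
lemma IsSelfAdjointOp.exists_adjointableCLM_of_univ [CompleteSpace E] (hT : IsLinearOn univ T)
    (h : IsSelfAdjointOp univ T) :
    ∃ Tc : E →L[ℂ] E, (∀ x, Tc x = T x) ∧ AdjointableCLM Tc Tc := by
  let L : E →ₗ[ℂ] E :=
    { toFun := T
      map_add' := fun _ _ => hT.map_add trivial trivial
      map_smul' := fun c _ => hT.map_smul c trivial }
  have hL : Continuous L := L.continuous_of_isClosed_graph <| by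
    convert h.isClosed_graph dense_univ using 1
    ext p
    simp [L, LinearMap.mem_graph_iff]
  exact ⟨⟨L, hL⟩, fun _ => rfl, fun x y => h.inner_map_eq trivial trivial⟩

end Operators

section UnitaryGroup

variable {A : Type u} [NonUnitalCStarAlgebra A] [PartialOrder A]
  {E : Type u} [NormedAddCommGroup E] [NormedSpace ℂ E] [SMul Aᵐᵒᵖ E] [CStarModuleRight A E]
  {U : ℝ → E →L[ℂ] E}

local notation "⟪" x ", " y "⟫" => inner (𝕜 := A) x y

lemma inner_apply_left (hU : IsC0Group U) (hunit : ∀ t, IsUnitaryCLM (U t)) (t : ℝ) (x y : E) :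
    ⟪U t x, y⟫ = ⟪x, U (-t) y⟫ := by
  obtain ⟨v, hv, hvU, -⟩ := hunit t
  have hv' : v = U (-t) := by
    ext z
    simpa [hU.apply_apply_neg] using congrArg (fun L : E →L[ℂ] E => L (U (-t) z)) hvU
  rw [hv, hv']

lemma inner_apply_right (hU : IsC0Group U) (hunit : ∀ t, IsUnitaryCLM (U t)) (t : ℝ) (x y : E) :
    ⟪x, U t y⟫ = ⟪U (-t) x, y⟫ := by
  rw [inner_apply_left hU hunit, neg_neg]

lemma inner_apply_apply (hU : IsC0Group U) (hunit : ∀ t, IsUnitaryCLM (U t)) (t : ℝ) (x y : E) :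
    ⟪U t x, U t y⟫ = ⟪x, y⟫ := by
  rw [inner_apply_left hU hunit, ← hU.apply_add, neg_add_cancel, hU.apply_zero]

lemma norm_apply (hU : IsC0Group U) (hunit : ∀ t, IsUnitaryCLM (U t)) (t : ℝ) (x : E) :
    ‖U t x‖ = ‖x‖ := by
  rw [CStarModuleRight.norm_eq_sqrt_norm_inner_self,
    CStarModuleRight.norm_eq_sqrt_norm_inner_self x, inner_apply_apply hU hunit]

lemma apply_op_smul (hU : IsC0Group U) (hunit : ∀ t, IsUnitaryCLM (U t)) (t : ℝ) (x : E) (a : A) :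
    U t (x <• a) = U t x <• a :=
  CStarModuleRight.ext_inner_right fun w => by
    rw [inner_apply_right hU hunit, CStarModuleRight.inner_op_smul_right,
      CStarModuleRight.inner_op_smul_right, inner_apply_right hU hunit]

lemma hasDerivAt_op_smul (hU : IsC0Group U) (hunit : ∀ t, IsUnitaryCLM (U t)) (a : A) {x : E}
    (hx : x ∈ genDom U) : HasDerivAt (fun t => U t (x <• a)) (gen U x <• a) 0 := by
  simpa only [Function.comp_def, coe_restrictScalars', CStarModuleRight.opSmulCLM_apply,
    apply_op_smul hU hunit] using
    ((CStarModuleRight.opSmulCLM a).restrictScalars ℝ).hasFDerivAt.comp_hasDerivAt 0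
      (hasDerivAt_gen hx)

variable [StarOrderedRing A]

lemma inner_gen_add_inner_gen_eq_zero (hU : IsC0Group U) (hunit : ∀ t, IsUnitaryCLM (U t))
    {x y : E} (hx : x ∈ genDom U) (hy : y ∈ genDom U) : ⟪gen U x, y⟫ + ⟪x, gen U y⟫ = 0 := by
  have hquot : ∀ t : ℝ, ⟪t⁻¹ • (U t x - x), U t y⟫ + ⟪x, t⁻¹ • (U t y - y)⟫ = 0 := fun t => by
    rw [CStarModuleRight.inner_smul_left_real, CStarModuleRight.inner_smul_right_real, ← smul_add,
      CStarModuleRight.inner_sub_left, CStarModuleRight.inner_sub_right,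
      inner_apply_apply hU hunit, sub_add_sub_cancel, sub_self, smul_zero]
  have hUy : Tendsto (fun t => U t y) (𝓝[≠] 0) (𝓝 y) := by
    simpa only [hU.apply_zero] using ((hU.strong_cont y).tendsto 0).mono_left nhdsWithin_le_nhds
  have hinner := CStarModuleRight.continuous_inner (A := A) (E := E)
  have hlim := ((hinner.tendsto _).comp ((tendsto_slope_gen hU hx).prodMk_nhds hUy)).add
    ((hinner.tendsto _).comp ((tendsto_const_nhds (x := x)).prodMk_nhds (tendsto_slope_gen hU hy)))
  exact tendsto_nhds_unique hlim (by simpa only [Function.comp_def, hquot] using tendsto_const_nhds)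

variable [CompleteSpace E]

lemma isSkewAdjointOp_gen (hU : IsC0Group U) (hunit : ∀ t, IsUnitaryCLM (U t)) :
    IsSkewAdjointOp (genDom U : Set E) (gen U) := by
  have hcontr : ∀ t x, ‖U t x‖ ≤ ‖x‖ := fun t x => (norm_apply hU hunit t x).le
  have hskew : ∀ x ∈ genDom U, ∀ y ∈ genDom U, ⟪gen U x, y⟫ = -⟪x, gen U y⟫ :=
    fun x hx y hy => eq_neg_of_add_eq_zero_left (inner_gen_add_inner_gen_eq_zero hU hunit hx hy)
  refine ⟨Subset.antisymm (fun y ⟨z, hz⟩ => ?_) (fun y hy => ⟨-gen U y, fun x hx => ?_⟩),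
    fun y hy => adjFun_eq_of_forall (dense_genDom hU) fun x hx => ?_⟩
  · -- `y - v` is orthogonal to the range of `1 - gen U`, which is everything
    obtain ⟨v, hv, hvyz⟩ := exists_add_gen_eq hU hcontr (y - z)
    obtain ⟨x, hx, hxyv⟩ := exists_sub_gen_eq hU hcontr (y - v)
    have horth : ⟪x - gen U x, y - v⟫ = 0 :=
      calc ⟪x - gen U x, y - v⟫ = ⟪x, y - v⟫ - ⟪gen U x, y⟫ + ⟪gen U x, v⟫ := by
            rw [CStarModuleRight.inner_sub_left, CStarModuleRight.inner_sub_right (gen U x)]; abel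
        _ = ⟪x, (y - z) - (v + gen U v)⟫ := by
            simp only [hz x hx, hskew x hx v hv, CStarModuleRight.inner_sub_right,
              CStarModuleRight.inner_add_right]
            abel
        _ = 0 := by rw [hvyz, sub_self, CStarModuleRight.inner_zero_right]
    rw [hxyv, CStarModuleRight.inner_self, sub_eq_zero] at horth
    exact horth ▸ hv
  all_goals rw [hskew x hx y hy, CStarModuleRight.inner_neg_right]

lemma isRegular_neg_I_smul_gen (hU : IsC0Group U) (hunit : ∀ t, IsUnitaryCLM (U t)) :
    IsRegular (genDom U : Set E) fun x => -Complex.I • gen U x := by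
  have hsa := (isSkewAdjointOp_gen hU hunit).isSelfAdjointOp_neg_I_smul (dense_genDom hU)
  refine
    { dense_dom := dense_genDom hU
      linear := isLinearOn_gen.const_smul _
      op_smul_mem := fun a x hx => mem_genDom_of_hasDerivAt (hasDerivAt_op_smul hU hunit a hx)
      map_op_smul := fun a x hx => by
        rw [gen_eq_of_hasDerivAt (hasDerivAt_op_smul hU hunit a hx),
          CStarModuleRight.smul_op_smul]
      closed_graph := hsa.isClosed_graph (dense_genDom hU)
      dense_adj_dom := by rw [hsa.1]; exact dense_genDom hU
      dense_image := dense_univ.mono fun y _ => ?_ }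
  obtain ⟨x, hx, hgx, rfl⟩ :=
    exists_sub_gen_gen_eq hU (fun t x => (norm_apply hU hunit t x).le) y
  have hTx : -Complex.I • gen U x ∈ genDom U := (genDom U).smul_mem _ hgx
  refine ⟨x, ⟨hx, hsa.1.symm ▸ hTx⟩, ?_⟩
  dsimp only
  rw [hsa.2 _ hTx]
  dsimp only
  rw [gen_smul _ hgx, smul_smul]
  simp [sub_eq_add_neg]

end UnitaryGroup

section HilbertModule

variable {A : Type u} [NonUnitalCStarAlgebra A] [PartialOrder A] [StarOrderedRing A]
variable {E : Type u} [NormedAddCommGroup E] [NormedSpace ℂ E] [SMul Aᵐᵒᵖ E]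
  [CStarModuleRight A E] [CompleteSpace E]

/-- **Stone's theorem for Hilbert C⋆-modules.** Let `(U_t)` be a `C₀`-group on
the Hilbert C⋆-module `E` consisting of unitary elements of `L(E)`.  Then (i) there is a
self-adjoint regular operator `T` on `E` with `U_t = exp(itT)` for all `t` (rendered via the
characterizing property that `iT` is the generator of `(U_t)`), and (ii) if `t ↦ U_t` is norm
continuous, then `T ∈ L(E)`, i.e. `T` is an everywhere-defined bounded adjointable operator. -/
theorem statement1 (U : ℝ → (E →L[ℂ] E)) (hgrp : IsC0Group U)
    (hunit : ∀ t : ℝ, IsUnitaryCLM (U t)) :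
    ∃ (D : Set E) (T : E → E), IsRegular D T ∧ IsSelfAdjointOp D T ∧
      IsGenOfGroup U D (fun x => Complex.I • T x) ∧
      ((Continuous U) → D = Set.univ ∧
        ∃ Tc : E →L[ℂ] E, (∀ x, Tc x = T x) ∧ ∃ v : E →L[ℂ] E, AdjointableCLM Tc v) := by
  have hsa := (isSkewAdjointOp_gen hgrp hunit).isSelfAdjointOp_neg_I_smul (dense_genDom hgrp)
  refine ⟨genDom U, fun x => -Complex.I • gen U x, isRegular_neg_I_smul_gen hgrp hunit, hsa,
    ?_, fun hc => ?_⟩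
  · simpa only [smul_smul, mul_neg, Complex.I_mul_I, neg_neg, one_smul] using isGenOfGroup_gen hgrp
  have hD : (genDom U : Set E) = univ := by
    rw [genDom_eq_top_of_continuous hgrp hc, Submodule.top_coe]
  rw [hD] at hsa
  obtain ⟨Tc, hTc, hadj⟩ :=
    hsa.exists_adjointableCLM_of_univ (hD ▸ isLinearOn_gen.const_smul (-Complex.I))
  exact ⟨hD, Tc, hTc, Tc, hadj⟩

end HilbertModule

end OSMult
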